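/- On the 5-dimensional nilpotent Lie algebra with structure equations de¹ = de² = 0, de³ = e¹∧e², de⁴ = e¹∧e³, de⁵ = e²∧e³, the forms η = e¹, ω₁ = e²∧e⁴ + e⁵∧e³, ω₂ = e²∧e⁵ + e³∧e⁴, ω₃ = e²∧e³ + e⁴∧e⁵ satisfy d(ω₁∧η) = 0, d(ω₂∧η) = 0, and d(ω₃∧ω₃) = 0. -/
import Mathlib


/-- The generators `e¹, …, e⁵` (0-indexed) of the exterior algebra of the dual
of a 5-dimensional Lie algebra. -/
noncomputable def E : Fin 5 → ExteriorAlgebra ℝ (Fin 5 → ℝ) :=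
  fun i => ExteriorAlgebra.ι ℝ (Pi.single i 1)

lemma E_sq (i : Fin 5) : E i * E i = 0 := ExteriorAlgebra.ι_sq_zero _

lemma E_sq' (i : Fin 5) (x : ExteriorAlgebra ℝ (Fin 5 → ℝ)) : E i * (E i * x) = 0 := by
  rw [← mul_assoc, E_sq, zero_mul]

lemma E_swap (i j : Fin 5) : E j * E i = -(E i * E j) := by
  have h : E i * E j + E j * E i = 0 := by
    simp only [E]; exact ExteriorAlgebra.ι_add_mul_swap _ _
  exact eq_neg_of_add_eq_zero_right h

lemma E_swap' (i j : Fin 5) (x : ExteriorAlgebra ℝ (Fin 5 → ℝ)) :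
    E j * (E i * x) = -(E i * (E j * x)) := by
  rw [← mul_assoc, E_swap, ← mul_assoc, neg_mul]

/-- On the 5-dimensional nilpotent Lie algebra `(0,0,12,13,23)`, with
Chevalley–Eilenberg differential `d` (linear, vanishing on constants, an
anti-derivation, with `de¹ = de² = 0`, `de³ = e¹∧e²`, `de⁴ = e¹∧e³`,
`de⁵ = e²∧e³`), the forms `η = e¹`, `ω₁ = e²∧e⁴ + e⁵∧e³`,
`ω₂ = e²∧e⁵ + e³∧e⁴`, `ω₃ = e²∧e³ + e⁴∧e⁵` satisfy
`d(ω₁∧η) = d(ω₂∧η) = d(ω₃∧ω₃) = 0`. -/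
theorem balanced_su2_nilpotent_12_13_23
    (d : ExteriorAlgebra ℝ (Fin 5 → ℝ) →ₗ[ℝ] ExteriorAlgebra ℝ (Fin 5 → ℝ))
    (hd1 : d 1 = 0)
    (hLeib : ∀ (v : Fin 5 → ℝ) (x : ExteriorAlgebra ℝ (Fin 5 → ℝ)),
      d (ExteriorAlgebra.ι ℝ v * x)
        = d (ExteriorAlgebra.ι ℝ v) * x - ExteriorAlgebra.ι ℝ v * d x)
    (h1 : d (E 0) = 0) (h2 : d (E 1) = 0)
    (h3 : d (E 2) = E 0 * E 1) (h4 : d (E 3) = E 0 * E 2)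
    (h5 : d (E 4) = E 1 * E 2) :
    d ((E 1 * E 3 + E 4 * E 2) * E 0) = 0 ∧
    d ((E 1 * E 4 + E 2 * E 3) * E 0) = 0 ∧
    d ((E 1 * E 2 + E 3 * E 4) * (E 1 * E 2 + E 3 * E 4)) = 0 := by
  have hLeib' : ∀ (i : Fin 5) (x : ExteriorAlgebra ℝ (Fin 5 → ℝ)),
      d (E i * x) = d (E i) * x - E i * d x := fun i x => hLeib _ x
  have hsw10 := E_swap' 0 1
  have hsw20 := E_swap' 0 2
  have hsw30 := E_swap' 0 3
  have hsw40 := E_swap' 0 4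
  have hsw21 := E_swap' 1 2
  have hsw31 := E_swap' 1 3
  have hsw41 := E_swap' 1 4
  have hsw32 := E_swap' 2 3
  have hsw42 := E_swap' 2 4
  have hsw43 := E_swap' 3 4
  have he10 := E_swap 0 1
  have he20 := E_swap 0 2
  have he30 := E_swap 0 3
  have he40 := E_swap 0 4
  have he21 := E_swap 1 2
  have he31 := E_swap 1 3
  have he41 := E_swap 1 4
  have he32 := E_swap 2 3
  have he42 := E_swap 2 4
  have he43 := E_swap 3 4
  refine ⟨?_, ?_, ?_⟩ <;>
    simp only [mul_add, add_mul, map_add, mul_assoc, hLeib', h1, h2, h3, h4, h5,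
      zero_mul, mul_zero, zero_sub, sub_zero, mul_neg, neg_mul, neg_neg, mul_sub, sub_mul, sub_self,
      map_neg, map_smul, smul_eq_mul, neg_smul, one_smul, smul_zero, smul_add, smul_neg,
      mul_smul_comm, smul_mul_assoc, smul_smul,
      hsw10, hsw20, hsw30, hsw40, hsw21, hsw31, hsw41, hsw32, hsw42, hsw43,
      he10, he20, he30, he40, he21, he31, he41, he32, he42, he43,
      E_sq, E_sq', zero_add, add_zero, neg_zero]
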